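/- Let C be a linear code of length n over a finite commutative Frobenius ring R, and let F = (F_0, F_1, …, F_t) be a tuple of non-empty subsets of {0, 1, …, t}. Let P^F be the (t+1)×(t+1) matrix with (i,j) entry 1 if j ∈ F_i and 0 otherwise. Then, as an identity of polynomials in the variables y_{iℓ} (i ∈ {0,…,t}, ℓ ∈ {1,…,n}), sse_C(P^F Y) = Σ_{X ⊆ t·[n]} B^F_C(X) · ∏_{i=0}^t ∏_{ℓ ∈ M_i(X)} y_{iℓ}, where the sum runs over all submultisets X of t·[n]. -/

import Mathlib

/-!
Since the `a_i` represent every principal ideal exactly once, the factor of `sse_C` at a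
coordinate `ℓ` of a codeword `c` is the single variable `x_{i,ℓ}` with `c_ℓ R = a_i R`, and
substituting `P^F Y` turns it into `∑_{j ∈ F_i} y_{jℓ}`. Expanding the product over `ℓ`
gives one monomial `∏_ℓ y_{m(ℓ),ℓ}` for each `m : [n] → {0, …, t}` with `m(ℓ) ∈ F_{i_c(ℓ)}`
for all `ℓ`, and the codewords contributing to a fixed `m` are exactly those counted by
`B^F_C(m)`.
-/

noncomputable section
open scoped BigOperators

/-- The dual of a linear code `C ⊆ Rⁿ` with respect to the standard inner
product `u·v = ∑ ℓ, u ℓ * v ℓ`. -/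
def dualCode {R : Type*} [CommRing R] {n : ℕ} (C : Submodule R (Fin n → R)) :
    Submodule R (Fin n → R) where
  carrier := {v | ∀ u ∈ C, ∑ ℓ, u ℓ * v ℓ = 0}
  add_mem' := by
    intro v w hv hw u hu
    simp only [Set.mem_setOf_eq] at *
    have h1 := hv u hu
    have h2 := hw u hu
    simp only [Pi.add_apply, mul_add, Finset.sum_add_distrib, h1, h2, add_zero]
  zero_mem' := by
    intro u hu
    simp
  smul_mem' := by
    intro c v hv u hu
    simp only [Set.mem_setOf_eq] at *
    have h := hv u hu
    have : ∑ ℓ, u ℓ * (c • v) ℓ = c * ∑ ℓ, u ℓ * v ℓ := by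
      rw [Finset.mul_sum]
      exact Finset.sum_congr rfl fun ℓ _ => by
        simp only [Pi.smul_apply, smul_eq_mul]; ring
    rw [this, h, mul_zero]

/-- A finite commutative ring is Frobenius iff `|C|·|C⊥| = |R|ⁿ` for every
linear code `C` of every length `n` over `R`. -/
def IsFrobeniusRing (R : Type*) [CommRing R] [Fintype R] : Prop :=
  ∀ (n : ℕ) (C : Submodule R (Fin n → R)),
    Nat.card C * Nat.card (dualCode C) = Fintype.card R ^ n

open MvPolynomial Classical

/-- The symmetrized support enumerator
`sse_C = ∑_{c ∈ C} ∏_{ℓ} x_{i_c(ℓ), ℓ}`, where `i_c(ℓ)` is the unique index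
with `c_ℓ R = a_{i_c(ℓ)} R`; the variable `X (i, ℓ)` plays the role of
`x_{iℓ}`. -/
def sse {R : Type*} [CommRing R] [Fintype R] {t n : ℕ} (a : Fin (t + 1) → R)
    (C : Submodule R (Fin n → R)) : MvPolynomial (Fin (t + 1) × Fin n) ℚ :=
  haveI : Fintype C := Fintype.ofFinite C
  ∑ c : C, ∏ ℓ : Fin n, ∏ i : Fin (t + 1),
    if Ideal.span {(c : Fin n → R) ℓ} = Ideal.span {a i} then X (i, ℓ) else 1

/-- For a tuple `F = (F₀, …, F_t)` of subsets of `{0, …, t}` and a submultiset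
`X ⊆ t·[n]` (identified with its multiplicity function `m : [n] → {0, …, t}`),
`B^F_C(X) = |{c ∈ C : S_i(c) ⊆ ∪_{j ∈ F_i} M_j(X) for all i}|`. -/
def BF {R : Type*} [CommRing R] {t n : ℕ} (a : Fin (t + 1) → R)
    (C : Submodule R (Fin n → R)) (F : Fin (t + 1) → Set (Fin (t + 1)))
    (m : Fin n → Fin (t + 1)) : ℕ :=
  Nat.card {c : C // ∀ (i : Fin (t + 1)) (ℓ : Fin n),
    Ideal.span {(c : Fin n → R) ℓ} = Ideal.span {a i} → m ℓ ∈ F i}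

theorem MvPolynomial.prod_sum_ite_X {σ κ S : Type*} [Fintype σ] [DecidableEq σ] [Fintype κ]
    [CommSemiring S] (q : σ → κ → Prop) [∀ ℓ, DecidablePred (q ℓ)] :
    (∏ ℓ, ∑ j, if q ℓ j then (X (j, ℓ) : MvPolynomial (κ × σ) S) else 0) =
      ∑ m : σ → κ, if ∀ ℓ, q ℓ (m ℓ) then ∏ ℓ, X (m ℓ, ℓ) else 0 := by
  rw [Finset.prod_univ_sum, Fintype.piFinset_univ]
  simp only [Finset.prod_ite_zero, Finset.mem_univ, true_imp_iff]

theorem bind₁_prod_ite_X_eq_sum {R : Type*} [CommRing R] {t n : ℕ} (a : Fin (t + 1) → R)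
    (F : Fin (t + 1) → Set (Fin (t + 1))) (P : Matrix (Fin (t + 1)) (Fin (t + 1)) ℚ)
    (hrep : ∀ r : R, ∃ i, Ideal.span {r} = Ideal.span {a i})
    (hinj : ∀ i j, Ideal.span {a i} = Ideal.span {a j} → i = j)
    (hP : ∀ i j, P i j = if j ∈ F i then 1 else 0) (r : R) (ℓ : Fin n) :
    bind₁ (fun p : Fin (t + 1) × Fin n => ∑ j, MvPolynomial.C (P p.1 j) * X (j, p.2))
        (∏ i, if Ideal.span {r} = Ideal.span {a i} then X (i, ℓ) else 1) =
      ∑ j, if ∀ i, Ideal.span {r} = Ideal.span {a i} → j ∈ F i then X (j, ℓ) else 0 := by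
  obtain ⟨i₀, hi₀⟩ := hrep r
  have h_class : ∀ i, Ideal.span {r} = Ideal.span {a i} ↔ i = i₀ :=
    fun i => ⟨fun h => hinj i i₀ (h.symm.trans hi₀), fun h => h ▸ hi₀⟩
  simp only [h_class, Finset.prod_ite_eq', Finset.mem_univ, if_true, forall_eq,
    bind₁_X_right, hP]
  refine Finset.sum_congr rfl fun j _ => ?_
  split_ifs <;> simp

theorem stmt13_general {R : Type*} [CommRing R] [Fintype R]
    {t : ℕ} (a : Fin (t + 1) → R)
    (hrep : ∀ r : R, ∃ i, Ideal.span {r} = Ideal.span {a i})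
    (hinj : ∀ i j, Ideal.span {a i} = Ideal.span {a j} → i = j)
    {n : ℕ} (C : Submodule R (Fin n → R))
    (F : Fin (t + 1) → Set (Fin (t + 1)))
    (P : Matrix (Fin (t + 1)) (Fin (t + 1)) ℚ)
    (hP : ∀ i j, P i j = if j ∈ F i then 1 else 0) :
    (MvPolynomial.bind₁ (fun p : Fin (t + 1) × Fin n =>
        ∑ j : Fin (t + 1), MvPolynomial.C (P p.1 j) * X (j, p.2))) (sse a C) =
      ∑ m : Fin n → Fin (t + 1),
        MvPolynomial.C ((BF a C F m : ℚ)) * ∏ ℓ : Fin n, X (m ℓ, ℓ) := by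
  simp only [sse, map_sum, map_prod, bind₁_prod_ite_X_eq_sum a F P hrep hinj hP,
    MvPolynomial.prod_sum_ite_X]
  rw [Finset.sum_comm]
  refine Finset.sum_congr rfl fun m _ => ?_
  simp only [forall_comm (α := Fin n), ← Finset.sum_filter, Finset.sum_const]
  rw [BF, Nat.card_eq_fintype_card, Fintype.card_subtype, nsmul_eq_mul,
    ← map_natCast MvPolynomial.C]
  -- `sse` counts over the `Fintype C` instance `Fintype.ofFinite C`, not the canonical one
  congr!

/-- for any tuple `F` of non-empty subsets of `{0, …, t}`,
`sse_C(P^F Y) = ∑_{X ⊆ t·[n]} B^F_C(X) ∏ᵢ ∏_{ℓ ∈ M_i(X)} y_{iℓ}`. -/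
theorem stmt13 {R : Type*} [CommRing R] [Fintype R] (hR : IsFrobeniusRing R)
    {t : ℕ} (a : Fin (t + 1) → R)
    (hrep : ∀ r : R, ∃ i, Ideal.span {r} = Ideal.span {a i})
    (hinj : ∀ i j, Ideal.span {a i} = Ideal.span {a j} → i = j)
    {n : ℕ} (C : Submodule R (Fin n → R))
    (F : Fin (t + 1) → Set (Fin (t + 1))) (hF : ∀ i, (F i).Nonempty)
    (P : Matrix (Fin (t + 1)) (Fin (t + 1)) ℚ)
    (hP : ∀ i j, P i j = if j ∈ F i then 1 else 0) :
    (MvPolynomial.bind₁ (fun p : Fin (t + 1) × Fin n =>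
        ∑ j : Fin (t + 1), MvPolynomial.C (P p.1 j) * X (j, p.2))) (sse a C) =
      ∑ m : Fin n → Fin (t + 1),
        MvPolynomial.C ((BF a C F m : ℚ)) * ∏ ℓ : Fin n, X (m ℓ, ℓ) :=
  stmt13_general a hrep hinj C F P hP

end
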